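/- arXiv:1909.00894 — 7 statements merged into one kernel-verified Lean document; each statement's English description precedes it below -/
import Mathlib

section
/- Let $n \ge 2$ and let $R$ be the $n \times n$ upper bidiagonal matrix with diagonal entries $r_{j,j} = 1 - j/n$ for $j = 1,\dots,n$ and superdiagonal entries $r_{j,j+1} = (j+1)/n$ for $j=1,\dots,n-1$. Let $e = (1,2,\dots,n)'$ and $p^{[0]} = (\binom{n}{1}/2^n, \binom{n}{2}/2^n, \dots, \binom{n}{n}/2^n)'$. Then for every positive integer $t$, $e' R^t p^{[0]} = \frac{n}{2}\left(1 - \frac{1}{n}\right)^t$. -/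
open Matrix Finset

/-- expected approximation error of RLS on OneMax.
Index `i : Fin n` corresponds to status `i+1` (number of zero bits). -/
theorem stmt_7 (n : ℕ) (hn : 2 ≤ n)
    (R : Matrix (Fin n) (Fin n) ℝ)
    (hR : R = Matrix.of fun i j : Fin n =>
      if j.val = i.val then 1 - ((i.val : ℝ) + 1) / n
      else if j.val = i.val + 1 then ((i.val : ℝ) + 2) / n
      else 0)
    (e p : Fin n → ℝ)
    (he : ∀ i : Fin n, e i = (i.val : ℝ) + 1)
    (hp : ∀ i : Fin n, p i = (n.choose (i.val + 1) : ℝ) / 2 ^ n)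
    (t : ℕ) (ht : 1 ≤ t) :
    e ⬝ᵥ (R ^ t).mulVec p = (n : ℝ) / 2 * (1 - 1 / n) ^ t := by
  have hn0 : (n : ℝ) ≠ 0 := by
    have : 0 < n := by omega
    exact_mod_cast this.ne'
  -- key eigenvector fact: e R = (1 - 1/n) e
  have key : Matrix.vecMul e R = (1 - 1 / (n : ℝ)) • e := by
    funext j
    simp only [Matrix.vecMul, dotProduct, Pi.smul_apply, smul_eq_mul, hR,
      Matrix.of_apply]
    have hsplit : ∀ i : Fin n,
        e i * (if j.val = i.val then 1 - ((i.val : ℝ) + 1) / n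
          else if j.val = i.val + 1 then ((i.val : ℝ) + 2) / n else 0)
        = (if i = j then ((j.val : ℝ) + 1) * (1 - ((j.val : ℝ) + 1) / n) else 0)
          + (if i.val + 1 = j.val then ((i.val : ℝ) + 1) * (((i.val : ℝ) + 2) / n) else 0) := by
      intro i
      rcases eq_or_ne i j with h | h
      · subst h
        simp [he]
      · have h1 : j.val ≠ i.val := fun hh => h (Fin.ext hh.symm)
        rcases eq_or_ne (i.val + 1) j.val with h2 | h2
        · simp [h1, h2.symm, h, he]
        · have h3 : ¬ (j.val = i.val + 1) := fun hh => h2 hh.symm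
          rw [if_neg h1, if_neg h3, if_neg h, if_neg h2, mul_zero, add_zero]
    rw [Finset.sum_congr rfl (fun i _ => hsplit i), Finset.sum_add_distrib]
    rw [Finset.sum_ite_eq' Finset.univ j (fun _ => ((j.val : ℝ) + 1) * (1 - ((j.val : ℝ) + 1) / n))]
    simp only [Finset.mem_univ, if_true]
    by_cases hj : j.val = 0
    · have : ∀ i : Fin n, (if i.val + 1 = j.val then ((i.val : ℝ) + 1) * (((i.val : ℝ) + 2) / n) else 0) = 0 := by
        intro i; rw [if_neg]; omega
      rw [Finset.sum_congr rfl (fun i _ => this i), Finset.sum_const_zero]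
      rw [he, hj]
      push_cast
      ring
    · set i0 : Fin n := ⟨j.val - 1, by omega⟩ with hi0
      have hcond : ∀ i : Fin n, (i.val + 1 = j.val) ↔ i = i0 := by
        intro i
        rw [Fin.ext_iff]
        simp only [hi0]
        omega
      have : ∀ i : Fin n,
          (if i.val + 1 = j.val then ((i.val : ℝ) + 1) * (((i.val : ℝ) + 2) / n) else 0)
          = (if i = i0 then ((i0.val : ℝ) + 1) * (((i0.val : ℝ) + 2) / n) else 0) := by
        intro i
        rcases eq_or_ne i i0 with h | h
        · rw [h, if_pos ((hcond i0).mpr rfl), if_pos rfl]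
        · rw [if_neg (fun hh => h ((hcond i).mp hh)), if_neg h]
      rw [Finset.sum_congr rfl (fun i _ => this i),
        Finset.sum_ite_eq' Finset.univ i0 (fun _ => ((i0.val : ℝ) + 1) * (((i0.val : ℝ) + 2) / n))]
      simp only [Finset.mem_univ, if_true, hi0, he]
      have hjv : 1 ≤ j.val := by omega
      have hcast : ((j.val - 1 : ℕ) : ℝ) = (j.val : ℝ) - 1 := by
        push_cast [hjv]; ring
      rw [hcast]
      field_simp
      ring
  -- induction: e (R^s) p = (1-1/n)^s (e ⬝ p)
  have main : ∀ s : ℕ, e ⬝ᵥ (R ^ s).mulVec p = (1 - 1 / (n : ℝ)) ^ s * (e ⬝ᵥ p) := by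
    intro s
    induction s with
    | zero => simp
    | succ s ih =>
      rw [pow_succ', ← Matrix.mulVec_mulVec, Matrix.dotProduct_mulVec, key,
        smul_dotProduct, smul_eq_mul, ih]
      ring
  -- e ⬝ p = n / 2
  have hsum : (∑ i : Fin n, (i.val + 1) * n.choose (i.val + 1)) = n * 2 ^ (n - 1) := by
    obtain ⟨m, rfl⟩ : ∃ m, n = m + 1 := ⟨n - 1, by omega⟩
    have step : ∀ k : ℕ, (k + 1) * (m + 1).choose (k + 1) = (m + 1) * m.choose k := by
      intro k
      rw [mul_comm, Nat.add_one_mul_choose_eq, mul_comm]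
    calc (∑ i : Fin (m + 1), (i.val + 1) * (m + 1).choose (i.val + 1))
        = ∑ i : Fin (m + 1), (m + 1) * m.choose i.val := by
          exact Finset.sum_congr rfl (fun i _ => step i.val)
      _ = (m + 1) * ∑ i : Fin (m + 1), m.choose i.val := by rw [Finset.mul_sum]
      _ = (m + 1) * 2 ^ m := by
          rw [Fin.sum_univ_eq_sum_range, Nat.sum_range_choose]
      _ = (m + 1) * 2 ^ (m + 1 - 1) := by simp
  have hep : e ⬝ᵥ p = (n : ℝ) / 2 := by
    simp only [dotProduct, he, hp]
    have : ∑ i : Fin n, ((i.val : ℝ) + 1) * ((n.choose (i.val + 1) : ℝ) / 2 ^ n)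
        = (∑ i : Fin n, ((i.val + 1) * n.choose (i.val + 1) : ℕ)) / 2 ^ n := by
      push_cast
      rw [Finset.sum_div]
      exact Finset.sum_congr rfl (fun i _ => by ring)
    rw [this, hsum]
    obtain ⟨m, rfl⟩ : ∃ m, n = m + 1 := ⟨n - 1, by omega⟩
    simp only [Nat.add_sub_cancel]
    push_cast
    rw [pow_succ]
    have h2 : (2 : ℝ) ^ m ≠ 0 := by positivity
    field_simp
  rw [main t, hep]
  ring
end

section
/- Let $n \ge 2$ and suppose a search process on OneMax has upper triangular transition matrix dominated by the auxiliary bidiagonal matrix with diagonal entries $s_{j,j} = 1 - \frac{j}{n}(1-\frac{1}{n})^{n-1}$ and superdiagonal $s_{j,j+1} = \frac{j+1}{n}(1-\frac{1}{n})^{n-1}$. With $e = (1,\dots,n)'$ and $p^{[0]}_i = \binom{n}{i}/2^n$, it holds that $e' S^t p^{[0]} = \frac{n}{2}\left(1 - \frac{1}{n}\left(1-\frac{1}{n}\right)^{n-1}\right)^t \le \frac{n}{2}\left(1 - \frac{1}{ne}\right)^t$ for all positive integers $t$. -/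
/-!
The weight vector `e = (1, …, n)` is a left eigenvector of `S` with eigenvalue `1 - c`, where
`c = (1 - 1/n)^(n-1) / n`: in column `j` the loss `j²c` on the diagonal is exactly made up by
the gain `(j - 1) j c` from the superdiagonal. Hence `e' S^t p = (1 - c)^t e' p`, and `e' p = n / 2` is
the mean of the binomial distribution `Bin(n, 1/2)`. The bound follows from
`(1 - 1/n)^(n-1) = (1 + 1/(n-1))^-(n-1) ≥ 1/e`.
-/

open Matrix Finset

theorem Matrix.dotProduct_pow_mulVec_of_vecMul_eq_smul {ι R : Type*} [Fintype ι] [DecidableEq ι]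
    [CommSemiring R] {A : Matrix ι ι R} {e : ι → R} {c : R} (he : e ᵥ* A = c • e)
    (p : ι → R) (t : ℕ) : e ⬝ᵥ (A ^ t) *ᵥ p = c ^ t * (e ⬝ᵥ p) := by
  induction t with
  | zero => simp
  | succ t ih =>
    rw [pow_succ', ← mulVec_mulVec, dotProduct_mulVec, he, smul_dotProduct, ih, smul_eq_mul,
      pow_succ', mul_assoc]

/-- The index `i : Fin n` stands for the status `i + 1` of the paper; from status `j` the
search moves to `j - 1` with probability `j * c`. -/
def oneMaxBidiag (n : ℕ) (c : ℝ) : Matrix (Fin n) (Fin n) ℝ :=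
  of fun i j => if j.val = i.val then 1 - ((i.val : ℝ) + 1) * c
    else if j.val = i.val + 1 then ((i.val : ℝ) + 2) * c else 0

theorem vecMul_oneMaxBidiag (n : ℕ) (c : ℝ) :
    (fun i : Fin n => (i.val : ℝ) + 1) ᵥ* oneMaxBidiag n c =
      (1 - c) • fun i : Fin n => (i.val : ℝ) + 1 := by
  ext ⟨j, hj⟩
  simp only [vecMul, dotProduct, oneMaxBidiag, of_apply, Pi.smul_apply, smul_eq_mul]
  rw [Fin.sum_univ_eq_sum_range (fun i : ℕ => ((i : ℝ) + 1) * (if j = i then 1 - ((i : ℝ) + 1) * c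
    else if j = i + 1 then ((i : ℝ) + 2) * c else 0))]
  have hsplit : ∀ i : ℕ, ((i : ℝ) + 1) * (if j = i then 1 - ((i : ℝ) + 1) * c
      else if j = i + 1 then ((i : ℝ) + 2) * c else 0) =
      (if j = i then ((i : ℝ) + 1) * (1 - ((i : ℝ) + 1) * c) else 0) +
      (if j = i + 1 then ((i : ℝ) + 1) * (((i : ℝ) + 2) * c) else 0) := by
    intro i
    split_ifs <;> first | omega | ring
  rw [sum_congr rfl fun i _ => hsplit i, sum_add_distrib, sum_ite_eq, if_pos (mem_range.2 hj)]
  rcases j with _ | k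
  · simp
  · simp only [Nat.add_right_cancel_iff, sum_ite_eq, mem_range.2 (Nat.lt_of_succ_lt hj), if_true]
    push_cast
    ring

theorem sum_range_succ_mul_choose_succ (n : ℕ) :
    ∑ i ∈ range n, ((i : ℝ) + 1) * n.choose (i + 1) = n * 2 ^ (n - 1) := by
  have h := Nat.sum_range_mul_choose n
  rw [sum_range_succ'] at h
  exact_mod_cast (by simpa using h)

theorem dotProduct_succ_choose_div_two_pow {n : ℕ} (hn : 0 < n) :
    (fun i : Fin n => (i.val : ℝ) + 1) ⬝ᵥ (fun i : Fin n => (n.choose (i.val + 1) : ℝ) / 2 ^ n)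
      = n / 2 := by
  have h2n : (2 : ℝ) ^ n = 2 * 2 ^ (n - 1) := by rw [← pow_succ', Nat.sub_add_cancel hn]
  simp only [dotProduct, mul_div_assoc', ← sum_div]
  rw [Fin.sum_univ_eq_sum_range (fun i => ((i : ℝ) + 1) * n.choose (i + 1)),
    sum_range_succ_mul_choose_succ, h2n]
  field_simp

theorem Real.exp_neg_one_le_one_sub_inv_pow {n : ℕ} (hn : 0 < n) :
    exp (-1) ≤ (1 - 1 / (n : ℝ)) ^ (n - 1) := by
  obtain ⟨m, rfl⟩ : ∃ m, n = m + 1 := ⟨n - 1, by omega⟩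
  rcases m.eq_zero_or_pos with rfl | hm
  · simp
  have hbase : (1 + (m : ℝ)⁻¹)⁻¹ = 1 - 1 / ((m + 1 : ℕ) : ℝ) := by
    have : (0 : ℝ) < m := by exact_mod_cast hm
    push_cast; field_simp; ring
  calc exp (-1) = (exp 1)⁻¹ := exp_neg 1
    _ ≤ ((1 + (m : ℝ)⁻¹) ^ m)⁻¹ := inv_anti₀ (by positivity) one_add_inv_pow_le_exp
    _ = _ := by rw [← inv_pow, hbase]; simp

theorem inv_mul_one_sub_inv_pow_le_one (n : ℕ) :
    1 / (n : ℝ) * (1 - 1 / n) ^ (n - 1) ≤ 1 := by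
  rcases n.eq_zero_or_pos with rfl | hn
  · simp
  have hinv : 1 / (n : ℝ) ≤ 1 := by
    rw [div_le_one (by positivity)]; exact_mod_cast hn
  have hbase : 0 ≤ 1 - 1 / (n : ℝ) := by linarith
  exact mul_le_one₀ hinv (pow_nonneg hbase _) (pow_le_one₀ hbase (by simp))

theorem inv_mul_exp_le_inv_mul_one_sub_inv_pow {n : ℕ} (hn : 0 < n) :
    1 / (n * Real.exp 1) ≤ 1 / (n : ℝ) * (1 - 1 / n) ^ (n - 1) := by
  calc 1 / (n * Real.exp 1) = 1 / (n : ℝ) * Real.exp (-1) := by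
        rw [Real.exp_neg]; field_simp
    _ ≤ _ := by gcongr; exact Real.exp_neg_one_le_one_sub_inv_pow hn

theorem stmt_10_general (n : ℕ) (hn : 2 ≤ n)
    (S : Matrix (Fin n) (Fin n) ℝ)
    (hS : S = Matrix.of fun i j : Fin n =>
      if j.val = i.val then 1 - ((i.val : ℝ) + 1) / n * (1 - 1 / n) ^ (n - 1)
      else if j.val = i.val + 1 then ((i.val : ℝ) + 2) / n * (1 - 1 / n) ^ (n - 1)
      else 0)
    (e p : Fin n → ℝ)
    (he : ∀ i : Fin n, e i = (i.val : ℝ) + 1)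
    (hp : ∀ i : Fin n, p i = (n.choose (i.val + 1) : ℝ) / 2 ^ n)
    (t : ℕ) :
    e ⬝ᵥ (S ^ t).mulVec p
        = (n : ℝ) / 2 * (1 - 1 / n * (1 - 1 / n) ^ (n - 1)) ^ t ∧
    e ⬝ᵥ (S ^ t).mulVec p ≤ (n : ℝ) / 2 * (1 - 1 / (n * Real.exp 1)) ^ t := by
  have hn0 : 0 < n := by omega
  have hS_bidiag : S = oneMaxBidiag n (1 / n * (1 - 1 / n) ^ (n - 1)) := by
    rw [hS]; ext i j; simp only [oneMaxBidiag, of_apply]; split_ifs <;> ring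
  obtain rfl : e = fun i : Fin n => (i.val : ℝ) + 1 := funext he
  obtain rfl : p = fun i : Fin n => (n.choose (i.val + 1) : ℝ) / 2 ^ n := funext hp
  rw [hS_bidiag, dotProduct_pow_mulVec_of_vecMul_eq_smul (vecMul_oneMaxBidiag n _),
    dotProduct_succ_choose_div_two_pow hn0, mul_comm]
  refine ⟨rfl, ?_⟩
  have hq := inv_mul_one_sub_inv_pow_le_one n
  have hqe := inv_mul_exp_le_inv_mul_one_sub_inv_pow hn0
  gcongr

/-- expected approximation error for the auxiliary bidiagonal
search dominating the (1+1)EA on OneMax. -/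
theorem stmt_10 (n : ℕ) (hn : 2 ≤ n)
    (S : Matrix (Fin n) (Fin n) ℝ)
    (hS : S = Matrix.of fun i j : Fin n =>
      if j.val = i.val then 1 - ((i.val : ℝ) + 1) / n * (1 - 1 / n) ^ (n - 1)
      else if j.val = i.val + 1 then ((i.val : ℝ) + 2) / n * (1 - 1 / n) ^ (n - 1)
      else 0)
    (e p : Fin n → ℝ)
    (he : ∀ i : Fin n, e i = (i.val : ℝ) + 1)
    (hp : ∀ i : Fin n, p i = (n.choose (i.val + 1) : ℝ) / 2 ^ n)
    (t : ℕ) (ht : 1 ≤ t) :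
    e ⬝ᵥ (S ^ t).mulVec p
        = (n : ℝ) / 2 * (1 - 1 / n * (1 - 1 / n) ^ (n - 1)) ^ t ∧
    e ⬝ᵥ (S ^ t).mulVec p ≤ (n : ℝ) / 2 * (1 - 1 / (n * Real.exp 1)) ^ t :=
  stmt_10_general n hn S hS e p he hp t
end

section
/- Let $n \ge 2$. The expected approximation error of RLS on the Peak problem with uniform random initialization equals $e^{[t]} = 1 - \frac{n+1}{2^n} + \frac{n}{2^n}\left(1 - \frac{1}{n}\right)^t$ for all $t \ge 0$. Equivalently, with $e = (1,1,\dots,1)'$, $R = \mathrm{diag}(1-\frac{1}{n}, 1, \dots, 1)$ ($n\times n$), and $p^{[0]}_i = \binom{n}{i}/2^n$, one has $e' R^t p^{[0]} = 1 - \frac{n+1}{2^n} + \frac{n}{2^n}(1-\frac{1}{n})^t$. -/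
/-!
`R ^ t` is diagonal and differs from the identity only at status 1, so `e' R^t p` is the total
initial mass `1 - 2⁻ⁿ` corrected by `((1 - 1/n)^t - 1)` times the initial mass `n / 2ⁿ` of status 1.
-/

open Matrix Finset

theorem sum_fin_choose_succ (n : ℕ) : ∑ i : Fin n, (n.choose (i + 1) : ℝ) = 2 ^ n - 1 := by
  have h := congrArg (Nat.cast : ℕ → ℝ) (Nat.sum_range_choose n)
  push_cast at h
  rw [sum_range_succ', Nat.choose_zero_right, Nat.cast_one] at h
  rw [Fin.sum_univ_eq_sum_range (fun i => (n.choose (i + 1) : ℝ))]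
  linarith

theorem one_dotProduct_diagonal_pow_mulVec {ι R : Type*} [Fintype ι] [DecidableEq ι]
    [CommSemiring R] (d p : ι → R) (t : ℕ) :
    1 ⬝ᵥ (diagonal d ^ t) *ᵥ p = ∑ i, d i ^ t * p i := by
  simp [dotProduct, diagonal_pow, mulVec_diagonal]

theorem sum_ite_pow_mul {ι R : Type*} [Fintype ι] [DecidableEq ι] [CommRing R]
    (j : ι) (a : R) (p : ι → R) (t : ℕ) :
    ∑ i, (if i = j then a else 1) ^ t * p i = ∑ i, p i + (a ^ t - 1) * p j := by
  have hsplit : ∀ i, (if i = j then a else 1) ^ t * p i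
      = p i + if i = j then (a ^ t - 1) * p j else 0 := by
    intro i
    split_ifs with h
    · subst h; ring
    · simp
  simp_rw [hsplit, sum_add_distrib, sum_ite_eq', mem_univ, if_true]

/-- expected approximation error of RLS on the Peak problem.
Index `i : Fin n` corresponds to status `i+1` (number of zero bits). -/
theorem stmt_12 (n : ℕ) (hn : 2 ≤ n)
    (R : Matrix (Fin n) (Fin n) ℝ)
    (hR : R = Matrix.diagonal (fun i : Fin n =>
      if i.val = 0 then 1 - 1 / (n : ℝ) else 1))
    (e p : Fin n → ℝ)
    (he : ∀ i : Fin n, e i = 1)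
    (hp : ∀ i : Fin n, p i = (n.choose (i.val + 1) : ℝ) / 2 ^ n)
    (t : ℕ) :
    e ⬝ᵥ (R ^ t).mulVec p
      = 1 - ((n : ℝ) + 1) / 2 ^ n + (n : ℝ) / 2 ^ n * (1 - 1 / n) ^ t := by
  have : NeZero n := ⟨by omega⟩
  have hR0 : R = diagonal fun i => if i = 0 then 1 - 1 / (n : ℝ) else 1 := by
    simp_rw [hR, Fin.val_eq_zero_iff]
  have hsum : ∑ i, p i = (2 ^ n - 1) / 2 ^ n := by
    simp_rw [hp, ← sum_div, sum_fin_choose_succ]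
  have hp0 : p 0 = n / 2 ^ n := by simp [hp]
  have he1 : e = 1 := funext he
  rw [he1, hR0, one_dotProduct_diagonal_pow_mulVec, sum_ite_pow_mul, hsum, hp0]
  field_simp
  ring
end

section
/- Let $n \ge 2$. The expected approximation error of the (1+1)EA on the Peak problem with uniform random initialization equals $e^{[t]} = \sum_{i=1}^{n}\left[1 - \left(\frac{1}{n-1}\right)^i \left(1-\frac{1}{n}\right)^{n}\right]^t \frac{\binom{n}{i}}{2^n}$. Equivalently, with diagonal transition submatrix $R = \mathrm{diag}\big(1 - (\frac{1}{n})^i(1-\frac{1}{n})^{n-i}\big)_{i=1}^n$, error vector $e=(1,\dots,1)'$, and $p^{[0]}_i = \binom{n}{i}/2^n$, $e' R^t p^{[0]}$ equals the stated sum. -/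
open Matrix Finset

/-- expected approximation error of the (1+1)EA on the Peak
problem. Index `i : Fin n` corresponds to status `i+1` (number of zero bits). -/
theorem stmt_13 (n : ℕ) (hn : 2 ≤ n)
    (R : Matrix (Fin n) (Fin n) ℝ)
    (hR : R = Matrix.diagonal (fun i : Fin n =>
      1 - (1 / (n : ℝ)) ^ (i.val + 1) * (1 - 1 / n) ^ (n - (i.val + 1))))
    (e p : Fin n → ℝ)
    (he : ∀ i : Fin n, e i = 1)
    (hp : ∀ i : Fin n, p i = (n.choose (i.val + 1) : ℝ) / 2 ^ n)
    (t : ℕ) :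
    e ⬝ᵥ (R ^ t).mulVec p
      = ∑ i : Fin n,
          (1 - (1 / ((n : ℝ) - 1)) ^ (i.val + 1) * (1 - 1 / n) ^ n) ^ t
            * (n.choose (i.val + 1) : ℝ) / 2 ^ n := by
  have hn0 : (n : ℝ) ≠ 0 := by positivity
  have hn1 : (n : ℝ) - 1 ≠ 0 := by
    have : (2 : ℝ) ≤ n := by exact_mod_cast hn
    linarith
  subst hR
  rw [Matrix.diagonal_pow]
  simp only [dotProduct, Matrix.mulVec_diagonal, he, hp, one_mul]
  refine Finset.sum_congr rfl fun i _ => ?_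
  have hkey : (1 / (n : ℝ)) ^ (i.val + 1) * (1 - 1 / n) ^ (n - (i.val + 1))
      = (1 / ((n : ℝ) - 1)) ^ (i.val + 1) * (1 - 1 / n) ^ n := by
    have hi : i.val + 1 ≤ n := i.isLt
    have hsplit : (1 - 1 / (n : ℝ)) ^ n
        = (1 - 1 / n) ^ (i.val + 1) * (1 - 1 / n) ^ (n - (i.val + 1)) := by
      rw [← pow_add, Nat.add_sub_cancel' hi]
    rw [hsplit, ← mul_assoc]
    congr 1
    rw [← mul_pow]
    congr 1
    field_simp
  simp only [Pi.pow_apply]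
  rw [hkey, mul_div_assoc]
end

section
/- Let $n \ge 2$ and let $R$ be the $n\times n$ upper bidiagonal matrix with diagonal $r_{1,1}=1$, $r_{j,j} = 1 - \frac{j-1}{n}$ for $2 \le j \le n-1$, $r_{n,n} = 0$, and superdiagonal $r_{j,j+1} = \frac{j}{n}$. With error vector $e = (1,2,\dots,n)'$ and initial distribution $p^{[0]} = (\binom{n}{0}/2^n, \binom{n}{1}/2^n, \dots, \binom{n}{n-1}/2^n)'$, the expected approximation error of RLS on the Deceptive problem satisfies $e' R^t p^{[0]} = \left(1 - \frac{1}{2^{n-1}}\right) + \left(\frac{n}{2} - \frac{n}{2^{n-1}}\right)\left(1 - \frac{1}{n}\right)^t$ for all $t \ge 1$. -/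
open Matrix Finset

noncomputable def Rm (n : ℕ) : Matrix (Fin n) (Fin n) ℝ :=
  Matrix.of fun i j : Fin n =>
    if j.val = i.val then
      (if i.val = n - 1 then 0 else 1 - (i.val : ℝ) / n)
    else if j.val = i.val + 1 then ((i.val : ℝ) + 1) / n
    else 0

noncomputable def xv (n : ℕ) : Fin n → ℝ :=
  fun i => if i.val = n - 1 then ((n : ℝ) - 1) / n else 1

noncomputable def zv (n : ℕ) : Fin n → ℝ :=
  fun i => if i.val = n - 1 then (n : ℝ) - 2 else (i.val : ℝ)

noncomputable def wv (n : ℕ) : Fin n → ℝ :=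
  fun i => if i.val = n - 1 then ((n : ℝ) + 1) / n else 0

lemma vecMul_Rm (n : ℕ) (hn : 2 ≤ n) (v : Fin n → ℝ) (j : Fin n) :
    Matrix.vecMul v (Rm n) j =
      v j * (if j.val = n - 1 then 0 else 1 - (j.val : ℝ) / n) +
      (if h : 0 < j.val then v ⟨j.val - 1, by omega⟩ * (j.val : ℝ) / n else 0) := by
  have hsum : Matrix.vecMul v (Rm n) j = ∑ i, v i * Rm n i j := by
    simp [Matrix.vecMul, dotProduct]
  rcases Nat.eq_zero_or_pos j.val with hj | hj
  · rw [hsum, dif_neg (by omega), add_zero, Finset.sum_eq_single j]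
    · simp [Rm]
    · intro i _ hij
      have h1 : ¬ (j.val = i.val) := fun h => hij (Fin.ext h.symm)
      have h2 : ¬ (j.val = i.val + 1) := by omega
      simp [Rm, h1, h2]
    · simp
  · set j' : Fin n := ⟨j.val - 1, by omega⟩ with hj'
    have hne : j' ≠ j := by
      simp only [Fin.ne_iff_vne, hj']
      omega
    rw [hsum, dif_pos hj,
      ← Finset.sum_subset (Finset.subset_univ ({j', j} : Finset (Fin n)))
        (fun i _ hi => by
          simp only [Finset.mem_insert, Finset.mem_singleton] at hi
          push_neg at hi
          obtain ⟨h1, h2⟩ := hi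
          have hv1 : ¬ (j.val = i.val) := fun h => h2 (Fin.ext h.symm)
          have hv2 : ¬ (j.val = i.val + 1) := by
            intro h
            apply h1
            apply Fin.ext
            simp only [hj']
            omega
          simp [Rm, hv1, hv2]),
      Finset.sum_pair hne]
    have hR1 : Rm n j' j = (j.val : ℝ) / n := by
      have h1 : ¬ (j.val = j'.val) := by simp only [hj']; omega
      have h2 : j.val = j'.val + 1 := by simp only [hj']; omega
      simp only [Rm, Matrix.of_apply, if_neg h1, if_pos h2]
      have : ((j'.val : ℝ) + 1) = (j.val : ℝ) := by
        simp only [hj']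
        push_cast [Nat.cast_sub (by omega : 1 ≤ j.val)]
        ring
      rw [this]
    have hR2 : Rm n j j = (if j.val = n - 1 then 0 else 1 - (j.val : ℝ) / n) := by
      simp [Rm]
    rw [hR1, hR2]
    ring

lemma xv_eig (n : ℕ) (hn : 2 ≤ n) : Matrix.vecMul (xv n) (Rm n) = xv n := by
  funext j
  rw [vecMul_Rm n hn]
  rcases Nat.eq_zero_or_pos j.val with hj | hj
  · rw [dif_neg (by omega)]
    have h1 : ¬ (j.val = n - 1) := by omega
    simp [xv, h1, hj, show ¬ ((0:ℕ) = n - 1) by omega]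
  · rw [dif_pos hj]
    have hjlt : j.val ≤ n - 1 := by omega
    by_cases hl : j.val = n - 1
    · have h2 : ¬ (j.val - 1 = n - 1) := by omega
      simp only [xv, if_pos hl, if_neg h2]
      have hc : (j.val : ℝ) = (n : ℝ) - 1 := by
        rw [hl]; push_cast [Nat.cast_sub (by omega : 1 ≤ n)]; ring
      rw [hc]; ring
    · have h2 : ¬ (j.val - 1 = n - 1) := by omega
      simp only [xv, if_neg hl, if_neg h2]
      ring

lemma zv_eig (n : ℕ) (hn : 2 ≤ n) :
    Matrix.vecMul (zv n) (Rm n) = (1 - 1 / (n : ℝ)) • zv n := by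
  have hn0 : (n : ℝ) ≠ 0 := by positivity
  funext j
  rw [vecMul_Rm n hn]
  simp only [Pi.smul_apply, smul_eq_mul]
  rcases Nat.eq_zero_or_pos j.val with hj | hj
  · rw [dif_neg (by omega)]
    have h1 : ¬ (j.val = n - 1) := by omega
    simp [zv, h1, hj, show ¬ ((0:ℕ) = n - 1) by omega]
  · rw [dif_pos hj]
    by_cases hl : j.val = n - 1
    · have h2 : ¬ (j.val - 1 = n - 1) := by omega
      simp only [zv, if_pos hl, if_neg h2]
      have hc1 : ((j.val - 1 : ℕ) : ℝ) = (n : ℝ) - 2 := by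
        push_cast [Nat.cast_sub (by omega : 1 ≤ j.val)]
        have : (j.val : ℝ) = (n : ℝ) - 1 := by
          rw [hl]; push_cast [Nat.cast_sub (by omega : 1 ≤ n)]; ring
        rw [this]; ring
      have hc2 : (j.val : ℝ) = (n : ℝ) - 1 := by
        rw [hl]; push_cast [Nat.cast_sub (by omega : 1 ≤ n)]; ring
      rw [hc1, hc2]
      field_simp
      ring
    · have h2 : ¬ (j.val - 1 = n - 1) := by omega
      simp only [zv, if_neg hl, if_neg h2]
      have hc : ((j.val - 1 : ℕ) : ℝ) = (j.val : ℝ) - 1 := by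
        push_cast [Nat.cast_sub (by omega : 1 ≤ j.val)]; ring
      rw [hc]
      field_simp
      ring

lemma wv_eig (n : ℕ) (hn : 2 ≤ n) : Matrix.vecMul (wv n) (Rm n) = 0 := by
  funext j
  rw [vecMul_Rm n hn]
  simp only [Pi.zero_apply]
  rcases Nat.eq_zero_or_pos j.val with hj | hj
  · rw [dif_neg (by omega)]
    have h1 : ¬ (j.val = n - 1) := by omega
    simp [wv, h1]
  · rw [dif_pos hj]
    have h2 : ¬ (j.val - 1 = n - 1) := by omega
    by_cases hl : j.val = n - 1
    · simp only [wv, if_pos hl, if_neg h2]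
      ring
    · simp only [wv, if_neg hl, if_neg h2]
      ring

lemma xv_pow (n : ℕ) (hn : 2 ≤ n) (t : ℕ) :
    Matrix.vecMul (xv n) (Rm n ^ t) = xv n := by
  induction t with
  | zero => simp [Matrix.vecMul_one]
  | succ s ih =>
    rw [pow_succ, ← Matrix.vecMul_vecMul, ih, xv_eig n hn]

lemma zv_pow (n : ℕ) (hn : 2 ≤ n) (t : ℕ) :
    Matrix.vecMul (zv n) (Rm n ^ t) = (1 - 1 / (n : ℝ)) ^ t • zv n := by
  induction t with
  | zero => simp [Matrix.vecMul_one]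
  | succ s ih =>
    rw [pow_succ, ← Matrix.vecMul_vecMul, ih, Matrix.smul_vecMul, zv_eig n hn,
      smul_smul, ← pow_succ]

lemma wv_pow (n : ℕ) (hn : 2 ≤ n) (t : ℕ) (ht : 1 ≤ t) :
    Matrix.vecMul (wv n) (Rm n ^ t) = 0 := by
  obtain ⟨s, rfl⟩ : ∃ s, t = s + 1 := ⟨t - 1, by omega⟩
  rw [pow_succ', ← Matrix.vecMul_vecMul, wv_eig n hn, Matrix.zero_vecMul]

lemma nat_sum_mul_choose (k : ℕ) :
    ∑ i ∈ range (k + 2), i * (k + 1).choose i = (k + 1) * 2 ^ k := by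
  rw [Finset.sum_range_succ']
  simp only [Nat.zero_mul, add_zero]
  have h : ∀ i, (i + 1) * (k + 1).choose (i + 1) = (k + 1) * k.choose i := by
    intro i
    rw [mul_comm]
    exact (Nat.add_one_mul_choose_eq k i).symm
  rw [Finset.sum_congr rfl (fun i _ => h i), ← Finset.mul_sum, Nat.sum_range_choose]

lemma xv_dot (n : ℕ) (hn : 2 ≤ n) (p : Fin n → ℝ)
    (hp : ∀ i : Fin n, p i = (n.choose i.val : ℝ) / 2 ^ n) :
    dotProduct (xv n) p = 1 - 1 / 2 ^ (n - 1) := by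
  obtain ⟨m, rfl⟩ : ∃ m, n = m + 2 := ⟨n - 2, by omega⟩
  have hA : ∑ i ∈ range (m + 1), ((m + 2).choose i : ℝ) = 2 ^ (m + 2) - (m + 3) := by
    have h := Nat.sum_range_choose (m + 2)
    rw [Finset.sum_range_succ, Finset.sum_range_succ, Nat.choose_self,
      Nat.choose_succ_self_right] at h
    have h' := congrArg (Nat.cast : ℕ → ℝ) h
    push_cast at h'
    linarith
  simp only [dotProduct, xv, hp, show m + 2 - 1 = m + 1 from rfl]
  rw [Fin.sum_univ_castSucc]
  simp only [Fin.coe_castSucc, Fin.val_last]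
  rw [Finset.sum_congr rfl (fun (i : Fin (m + 1)) _ => by
    rw [if_neg (Nat.ne_of_lt i.isLt), one_mul])]
  simp only [if_true]
  rw [Fin.sum_univ_eq_sum_range (fun i => (((m + 2).choose i : ℝ) / 2 ^ (m + 2)))]
  rw [← Finset.sum_div, hA]
  have hch : (((m + 2).choose (m + 1) : ℕ) : ℝ) = (m : ℝ) + 2 := by
    rw [Nat.choose_succ_self_right]; push_cast; ring
  rw [hch]
  have h1 : ((m : ℝ) + 2) ≠ 0 := by positivity
  have h2 : (2 : ℝ) ^ (m + 2) ≠ 0 := by positivity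
  have h3 : (2 : ℝ) ^ (m + 1) ≠ 0 := by positivity
  push_cast
  field_simp
  ring

lemma zv_dot (n : ℕ) (hn : 2 ≤ n) (p : Fin n → ℝ)
    (hp : ∀ i : Fin n, p i = (n.choose i.val : ℝ) / 2 ^ n) :
    dotProduct (zv n) p = (n : ℝ) / 2 - (n : ℝ) / 2 ^ (n - 1) := by
  obtain ⟨m, rfl⟩ : ∃ m, n = m + 2 := ⟨n - 2, by omega⟩
  have hB : ∑ i ∈ range (m + 1), (i : ℝ) * ((m + 2).choose i : ℝ)
      = ((m : ℝ) + 2) * 2 ^ (m + 1) - ((m : ℝ) + 2) - ((m : ℝ) + 1) * ((m : ℝ) + 2) := by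
    have h := nat_sum_mul_choose (m + 1)
    rw [Finset.sum_range_succ, Finset.sum_range_succ, Nat.choose_self,
      Nat.choose_succ_self_right] at h
    have h' := congrArg (Nat.cast : ℕ → ℝ) h
    push_cast at h'
    linarith
  simp only [dotProduct, zv, hp, show m + 2 - 1 = m + 1 from rfl]
  rw [Fin.sum_univ_castSucc]
  simp only [Fin.coe_castSucc, Fin.val_last]
  rw [Finset.sum_congr rfl (fun (i : Fin (m + 1)) _ => by
    rw [if_neg (Nat.ne_of_lt i.isLt)])]
  simp only [if_true]
  rw [Fin.sum_univ_eq_sum_range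
    (fun i => ((i : ℝ) * (((m + 2).choose i : ℝ) / 2 ^ (m + 2))))]
  rw [Finset.sum_congr rfl (fun i _ => (mul_div_assoc _ _ _).symm), ← Finset.sum_div, hB]
  have hch : (((m + 2).choose (m + 1) : ℕ) : ℝ) = (m : ℝ) + 2 := by
    rw [Nat.choose_succ_self_right]; push_cast; ring
  rw [hch]
  have h2 : (2 : ℝ) ^ (m + 2) ≠ 0 := by positivity
  have h3 : (2 : ℝ) ^ (m + 1) ≠ 0 := by positivity
  push_cast
  field_simp
  ring

/-- expected approximation error of RLS on the Deceptive
problem. Index `i : Fin n` corresponds to status `i+1`. -/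
theorem stmt_14 (n : ℕ) (hn : 2 ≤ n)
    (R : Matrix (Fin n) (Fin n) ℝ)
    (hR : R = Matrix.of fun i j : Fin n =>
      if j.val = i.val then
        (if i.val = n - 1 then 0 else 1 - (i.val : ℝ) / n)
      else if j.val = i.val + 1 then ((i.val : ℝ) + 1) / n
      else 0)
    (e p : Fin n → ℝ)
    (he : ∀ i : Fin n, e i = (i.val : ℝ) + 1)
    (hp : ∀ i : Fin n, p i = (n.choose i.val : ℝ) / 2 ^ n)
    (t : ℕ) (ht : 1 ≤ t) :
    e ⬝ᵥ (R ^ t).mulVec p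
      = (1 - 1 / 2 ^ (n - 1)) + ((n : ℝ) / 2 - (n : ℝ) / 2 ^ (n - 1)) * (1 - 1 / n) ^ t := by
  have hR' : R = Rm n := hR
  have he' : e = xv n + zv n + wv n := by
    funext i
    simp only [Pi.add_apply, xv, zv, wv, he]
    by_cases hl : i.val = n - 1
    · rw [if_pos hl, if_pos hl, if_pos hl]
      have hc : (i.val : ℝ) = (n : ℝ) - 1 := by
        rw [hl]; push_cast [Nat.cast_sub (by omega : 1 ≤ n)]; ring
      have hn0 : (n : ℝ) ≠ 0 := by positivity
      rw [hc]; field_simp; ring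
    · rw [if_neg hl, if_neg hl, if_neg hl]; ring
  rw [hR', Matrix.dotProduct_mulVec, he', Matrix.add_vecMul, Matrix.add_vecMul,
    xv_pow n hn t, zv_pow n hn t, wv_pow n hn t ht, add_zero,
    add_dotProduct, smul_dotProduct, xv_dot n hn p hp, zv_dot n hn p hp,
    smul_eq_mul]
  ring
end

section
/- For integers $1 \le j \le n$, $\sum_{i=j}^{n-1} \binom{i-1}{j-1}\binom{n}{i-1} + \binom{n-1}{j-1}\frac{n-j}{n+1-j}\binom{n}{n-1} = \binom{n}{j-1}\left(2^{n-j+1} - 2\right)$. -/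
/-!
Write `j = s + 1` and `n = s + m + 1`. Trading `binom(i-1, s) binom(n, i-1)` for
`binom(n, s) binom(m+1, i-1-s)` turns the sum into `binom(n, s)` times all of the row
`binom(m+1, ·)` except its last two entries, i.e. `binom(n, s) (2^(m+1) - m - 2)`. Since
`binom(n-1, s) n = binom(n, s) (m+1)`, the second term is `binom(n, s) m`, and the two add up.
-/

open Finset

namespace Nat

theorem choose_add_mul_choose (n s k : ℕ) :
    (s + k).choose s * n.choose (s + k) = n.choose s * (n - s).choose k := by
  rw [mul_comm, choose_mul (le_add_right s k), Nat.add_sub_cancel_left]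

theorem sum_range_choose_succ_add_two (m : ℕ) :
    ∑ k ∈ range m, (m + 1).choose k + (m + 2) = 2 ^ (m + 1) := by
  rw [← sum_range_choose, sum_range_succ, sum_range_succ, choose_succ_self_right,
    choose_self]
  ring

theorem sum_Icc_choose_sub_one_mul_choose (s m : ℕ) :
    ∑ i ∈ Icc (s + 1) (s + m), (i - 1).choose s * (s + m + 1).choose (i - 1)
      = (s + m + 1).choose s * ∑ k ∈ range m, (m + 1).choose k := by
  rw [← Ico_add_one_right_eq_Icc, sum_Ico_eq_sum_range, mul_sum]
  refine sum_congr (by congr 1; omega) fun k hk => ?_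
  have hkm : k < m := mem_range.mp hk
  rw [show s + 1 + k - 1 = s + k by omega, choose_add_mul_choose,
    show s + m + 1 - s = m + 1 by omega]

theorem choose_mul_add_one (s m : ℕ) :
    (s + m).choose s * (s + m + 1) = (s + m + 1).choose s * (m + 1) := by
  rw [choose_mul_succ_eq, show s + m + 1 - s = m + 1 by omega]

end Nat

/-- the identity used to compute `q_j' p^{[0]}` for RLS on
the Deceptive problem. -/
theorem stmt_17 (n j : ℕ) (hj : 1 ≤ j) (hjn : j ≤ n) :
    ∑ i ∈ Finset.Icc j (n - 1), ((i - 1).choose (j - 1) : ℝ) * (n.choose (i - 1))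
        + ((n - 1).choose (j - 1) : ℝ) * (((n : ℝ) - j) / ((n : ℝ) + 1 - j))
            * (n.choose (n - 1))
      = (n.choose (j - 1) : ℝ) * (2 ^ (n - j + 1) - 2) := by
  obtain ⟨s, rfl⟩ : ∃ s, j = s + 1 := ⟨j - 1, by omega⟩
  obtain ⟨m, rfl⟩ : ∃ m, n = s + m + 1 := ⟨n - s - 1, by omega⟩
  have hsum := congrArg (Nat.cast : ℕ → ℝ) (Nat.sum_Icc_choose_sub_one_mul_choose s m)
  have hbin := congrArg (Nat.cast : ℕ → ℝ) (Nat.sum_range_choose_succ_add_two m)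
  have hsecond := congrArg (Nat.cast : ℕ → ℝ) (Nat.choose_mul_add_one s m)
  push_cast at hsum hbin hsecond
  rw [Nat.add_sub_cancel, Nat.add_sub_cancel, hsum, Nat.choose_succ_self_right,
    show s + m + 1 - (s + 1) + 1 = m + 1 by omega]
  push_cast
  rw [show (s + m + 1 : ℝ) - (s + 1) = m by ring,
    show (s + m + 1 + 1 : ℝ) - (s + 1) = m + 1 by ring, ← hbin]
  field_simp
  linear_combination (m : ℝ) * hsecond
end

section
/- For integers $1 \le j \le n-1$, $\sum_{i=j}^{n-1} \binom{i-1}{j-1}\binom{n}{i-1} = \binom{n}{j-1}\left(2^{n-j+1} - (n-j+2)\right)$. -/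
/-!
The subset-of-a-subset identity `C(n, i) C(i, k) = C(n, k) C(n - k, i - k)` pulls `C(n, j - 1)`
out of the sum, leaving the row `∑ C(n - j + 1, t)` without its last two entries, i.e.
`2 ^ (n - j + 1) - (n - j + 2)`.
-/

open Finset

theorem sum_range_sub_one_choose_add (m : ℕ) :
    ∑ t ∈ range (m - 1), m.choose t + (m + 1) = 2 ^ m := by
  rcases m with _ | k
  · simp
  · rw [← Nat.sum_range_choose, sum_range_succ, sum_range_succ, Nat.choose_self,
      Nat.choose_succ_self_right, Nat.add_one_sub_one, add_assoc]
    rfl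

theorem sum_range_choose_mul_choose (n k r : ℕ) :
    ∑ t ∈ range r, (k + t).choose k * n.choose (k + t)
      = n.choose k * ∑ t ∈ range r, (n - k).choose t := by
  rw [mul_sum]
  refine sum_congr rfl fun t _ => ?_
  rw [mul_comm, Nat.choose_mul (Nat.le_add_right k t), Nat.add_sub_cancel_left]

/-- `∑_{i=j}^{n-1} C(i-1,j-1) C(n,i-1) = C(n,j-1)(2^{n-j+1}-(n-j+2))`. -/
theorem stmt_18 (n j : ℕ) (hj : 1 ≤ j) (hjn : j ≤ n - 1) :
    ∑ i ∈ Finset.Icc j (n - 1), ((i - 1).choose (j - 1) : ℝ) * (n.choose (i - 1))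
      = (n.choose (j - 1) : ℝ) * (2 ^ (n - j + 1) - ((n : ℝ) - j + 2)) := by
  obtain ⟨k, rfl⟩ : ∃ k, j = k + 1 := ⟨j - 1, by omega⟩
  obtain ⟨m, rfl⟩ : ∃ m, n = k + m + 1 := ⟨n - k - 1, by omega⟩
  have hsum : ∑ i ∈ Icc (k + 1) (k + m), (i - 1).choose k * (k + m + 1).choose (i - 1)
      = (k + m + 1).choose k * ∑ t ∈ range m, (m + 1).choose t := by
    rw [← Ico_add_one_right_eq_Icc, sum_Ico_eq_sum_range, show k + m + 1 - (k + 1) = m by omega,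
      show m + 1 = k + m + 1 - k by omega, ← sum_range_choose_mul_choose]
    exact sum_congr rfl fun t _ => by rw [show k + 1 + t - 1 = k + t by omega]
  have hrow := sum_range_sub_one_choose_add (m + 1)
  rw [Nat.add_one_sub_one] at hrow
  rw [show k + m + 1 - 1 = k + m by omega, show k + m + 1 - (k + 1) + 1 = m + 1 by omega,
    Nat.add_one_sub_one]
  have hsumR := congrArg (Nat.cast : ℕ → ℝ) hsum
  have hrowR := congrArg (Nat.cast : ℕ → ℝ) hrow
  push_cast at hsumR hrowR ⊢
  rw [hsumR]
  linear_combination (↑((k + m + 1).choose k) : ℝ) * hrowR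
end
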